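/- arXiv:math/0702142 — 3 statements merged into one kernel-verified Lean document; each statement's English description precedes it below -/
import Mathlib

section
/- Let R be an integral domain with quotient field K, let X be an indeterminate over R, and let * be a semistar operation on the polynomial ring R[X] satisfying (R[X])^* = R[X]. Define \bar{*} on R by E^{\bar{*}} = (E[X])^* ∩ K for each nonzero R-submodule E of K, where E[X] denotes the R[X]-submodule of K(X) generated by E. Then R^{\bar{*}} = R; consequently the restriction of \bar{*} to the nonzero fractional ideals of R is a star operation on R. -/
open Polynomial Pointwise

/-- A *semistar operation* on a domain `S` with quotient field `M`: a map on the
(nonzero) `S`-submodules of `M` satisfying `(aE)^* = aE^*`, `E ⊆ E^*`,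
monotonicity and idempotency. -/
structure IsSemistarOperation (S M : Type*) [CommRing S] [Field M] [Algebra S M]
    (star : Submodule S M → Submodule S M) : Prop where
  smul_eq : ∀ a : M, a ≠ 0 → ∀ E : Submodule S M, E ≠ ⊥ → star (a • E) = a • star E
  le_star : ∀ E : Submodule S M, E ≠ ⊥ → E ≤ star E
  mono : ∀ E F : Submodule S M, E ≠ ⊥ → F ≠ ⊥ → E ≤ F → star E ≤ star F
  idem : ∀ E : Submodule S M, E ≠ ⊥ → star (star E) = star E

variable {R K L : Type*} [CommRing R] [IsDomain R]
  [Field K] [Algebra R K] [IsFractionRing R K]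
  [Field L] [Algebra R[X] L] [IsFractionRing R[X] L]

/-- `E[X]`: the `R[X]`-submodule of `L = K(X)` generated by `E ⊆ K`,
where `ι : K →+* L` is the canonical embedding. -/
noncomputable def polyExt (ι : K →+* L) (E : Submodule R K) : Submodule R[X] L :=
  Submodule.span R[X] (ι '' (E : Set K))

/-- The operation `E ↦ E^{\bar{*}} = (E[X])^* ∩ K` on `R`-submodules of `K` induced by a
semistar operation `*` on `R[X]`. -/
noncomputable def barStar (star : Submodule R[X] L → Submodule R[X] L) (ι : K →+* L)
    (hι : ∀ r : R, ι (algebraMap R K r) = algebraMap R[X] L (C r))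
    (E : Submodule R K) : Submodule R K where
  carrier := ι ⁻¹' (star (polyExt ι E) : Set L)
  add_mem' := fun {a b} ha hb => by
    simp only [Set.mem_preimage, SetLike.mem_coe, map_add] at *
    exact (star (polyExt ι _)).add_mem ha hb
  zero_mem' := by
    simp only [Set.mem_preimage, SetLike.mem_coe, map_zero]
    exact (star (polyExt ι _)).zero_mem
  smul_mem' := fun r x hx => by
    simp only [Set.mem_preimage, SetLike.mem_coe] at *
    have h : ι (r • x) = (C r : R[X]) • ι x := by
      rw [Algebra.smul_def, map_mul, hι, Algebra.smul_def]
    rw [h]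
    exact (star (polyExt ι _)).smul_mem _ hx

/-
An element `x ∈ K` whose image in `K(X)` is a polynomial `p` lies in `R`: writing `x = a / b`,
the identity `p · b = a` in `R[X]` shows `x` is the constant term of `p`. Hence
`R^{\bar *} = (R[X])^* ∩ K = R[X] ∩ K = R`. The semistar axioms pass from `*` to `\bar *`
because `E ↦ E[X]` preserves nonzero submodules, inclusions and scalar multiples, and
`(E^{\bar *})[X] ⊆ (E[X])^*`. Finally, any semistar operation fixing `R` preserves
fractional ideals: `a I ⊆ R` gives `a I^* = (a I)^* ⊆ R^* = R`.
-/

theorem Submodule.mem_pointwise_smul_iff_inv_smul_mem₀ {S M : Type*} [CommRing S] [Field M]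
    [Algebra S M] {a : M} (ha : a ≠ 0) (N : Submodule S M) (x : M) :
    x ∈ a • N ↔ a⁻¹ • x ∈ N :=
  Set.mem_smul_set_iff_inv_smul_mem₀ ha (N : Set M) x

theorem Submodule.pointwise_smul_ne_bot {S M : Type*} [CommRing S] [Field M] [Algebra S M]
    {a : M} (ha : a ≠ 0) {N : Submodule S M} (hN : N ≠ ⊥) : a • N ≠ ⊥ := by
  obtain ⟨x, hx, hx0⟩ := Submodule.exists_mem_ne_zero_of_ne_bot hN
  exact (Submodule.ne_bot_iff _).mpr
    ⟨a • x, Submodule.smul_mem_pointwise_smul x a N hx, smul_ne_zero ha hx0⟩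

theorem isFractional_iff_exists_smul_le_one {A P : Type*} [CommRing A] [CommRing P]
    [Algebra A P] {S : Submonoid A} {I : Submodule A P} :
    IsFractional S I ↔ ∃ a ∈ S, algebraMap A P a • I ≤ 1 := by
  refine exists_congr fun a => and_congr_right fun _ => ⟨fun h => ?_, fun h b hb => ?_⟩
  · rintro _ ⟨b, hb, rfl⟩
    obtain ⟨c, hc⟩ := h b hb
    exact Submodule.mem_one.mpr ⟨c, hc.trans (algebraMap_smul P a b).symm⟩
  · obtain ⟨c, hc⟩ := Submodule.mem_one.mp (h (Submodule.smul_mem_pointwise_smul b _ I hb))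
    exact ⟨c, hc.trans (algebraMap_smul P a b)⟩

namespace IsSemistarOperation

variable {S M : Type*} [CommRing S] [Field M] [Algebra S M]
  {star : Submodule S M → Submodule S M}

theorem star_ne_bot (hstar : IsSemistarOperation S M star) {E : Submodule S M} (hE : E ≠ ⊥) :
    star E ≠ ⊥ :=
  ne_bot_of_le_ne_bot hE (hstar.le_star E hE)

theorem isFractional [IsDomain S] [IsFractionRing S M] (hstar : IsSemistarOperation S M star)
    (hone : star 1 = 1) {I : Submodule S M} (hI : I ≠ ⊥)
    (hfrac : IsFractional (nonZeroDivisors S) I) :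
    IsFractional (nonZeroDivisors S) (star I) := by
  obtain ⟨a, ha, haI⟩ := isFractional_iff_exists_smul_le_one.mp hfrac
  have ha0 : algebraMap S M a ≠ 0 := IsFractionRing.to_map_ne_zero_of_mem_nonZeroDivisors ha
  have hone_ne_bot : (1 : Submodule S M) ≠ ⊥ :=
    (Submodule.ne_bot_iff _).mpr ⟨1, Submodule.one_le.mp le_rfl, one_ne_zero⟩
  refine isFractional_iff_exists_smul_le_one.mpr ⟨a, ha, ?_⟩
  rw [← hstar.smul_eq _ ha0 I hI, ← hone]
  exact hstar.mono _ _ (Submodule.pointwise_smul_ne_bot ha0 hI) hone_ne_bot haI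

end IsSemistarOperation

section PolyExt

omit [IsDomain R] [IsFractionRing R K] [IsFractionRing R[X] L]

variable (ι : K →+* L)

theorem polyExt_ne_bot {E : Submodule R K} (hE : E ≠ ⊥) : polyExt ι E ≠ ⊥ := by
  obtain ⟨x, hx, hx0⟩ := Submodule.exists_mem_ne_zero_of_ne_bot hE
  exact (Submodule.ne_bot_iff _).mpr
    ⟨ι x, Submodule.subset_span ⟨x, hx, rfl⟩, (map_ne_zero ι).mpr hx0⟩

theorem polyExt_mono {E F : Submodule R K} (h : E ≤ F) : polyExt ι E ≤ polyExt ι F :=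
  Submodule.span_mono (Set.image_mono h)

theorem polyExt_le_iff {E : Submodule R K} {F : Submodule R[X] L} :
    polyExt ι E ≤ F ↔ ∀ x ∈ E, ι x ∈ F := by
  rw [polyExt, Submodule.span_le, Set.image_subset_iff]
  rfl

theorem polyExt_smul (a : K) (E : Submodule R K) : polyExt ι (a • E) = ι a • polyExt ι E := by
  rw [polyExt, polyExt, Submodule.coe_pointwise_smul, Set.image_smul_distrib,
    Submodule.smul_span]

theorem polyExt_one (hι : ∀ r : R, ι (algebraMap R K r) = algebraMap R[X] L (C r)) :
    polyExt ι (1 : Submodule R K) = 1 := by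
  refine le_antisymm ((polyExt_le_iff ι).mpr fun x hx => ?_) ?_
  · obtain ⟨r, rfl⟩ := Submodule.mem_one.mp hx
    exact Submodule.mem_one.mpr ⟨C r, (hι r).symm⟩
  · exact Submodule.one_le.mpr (Submodule.subset_span ⟨1, Submodule.one_le.mp le_rfl, map_one ι⟩)

end PolyExt

theorem apply_mem_one_iff (ι : K →+* L)
    (hι : ∀ r : R, ι (algebraMap R K r) = algebraMap R[X] L (C r)) {x : K} :
    ι x ∈ (1 : Submodule R[X] L) ↔ x ∈ (1 : Submodule R K) := by
  refine ⟨fun hx => ?_, fun hx => ?_⟩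
  · obtain ⟨p, hp⟩ := Submodule.mem_one.mp hx
    obtain ⟨⟨a, b⟩, hab⟩ := IsLocalization.surj (nonZeroDivisors R) x
    have hpoly : p * C (b : R) = C a := IsFractionRing.injective R[X] L <| by
      rw [map_mul, hp, ← hι, ← hι, ← map_mul, hab]
    refine Submodule.mem_one.mpr ⟨p.coeff 0, mul_right_cancel₀
      (IsFractionRing.to_map_ne_zero_of_mem_nonZeroDivisors b.2) ?_⟩
    rw [← map_mul, ← coeff_mul_C, hpoly, coeff_C_zero, hab]
  · obtain ⟨r, rfl⟩ := Submodule.mem_one.mp hx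
    exact Submodule.mem_one.mpr ⟨C r, (hι r).symm⟩

section BarStar

variable {star : Submodule R[X] L → Submodule R[X] L} {ι : K →+* L}
  {hι : ∀ r : R, ι (algebraMap R K r) = algebraMap R[X] L (C r)}

omit [IsDomain R] [IsFractionRing R K] [IsFractionRing R[X] L]

@[simp]
theorem mem_barStar {E : Submodule R K} {x : K} :
    x ∈ barStar star ι hι E ↔ ι x ∈ star (polyExt ι E) :=
  Iff.rfl

theorem polyExt_barStar_le (E : Submodule R K) :
    polyExt ι (barStar star ι hι E) ≤ star (polyExt ι E) :=
  (polyExt_le_iff ι).mpr fun _ hx => hx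

variable (hstar : IsSemistarOperation R[X] L star)
include hstar

theorem le_barStar {E : Submodule R K} (hE : E ≠ ⊥) : E ≤ barStar star ι hι E :=
  fun x hx => hstar.le_star _ (polyExt_ne_bot ι hE) (Submodule.subset_span ⟨x, hx, rfl⟩)

theorem barStar_mono {E F : Submodule R K} (hE : E ≠ ⊥) (hF : F ≠ ⊥) (h : E ≤ F) :
    barStar star ι hι E ≤ barStar star ι hι F :=
  fun _ hx => hstar.mono _ _ (polyExt_ne_bot ι hE) (polyExt_ne_bot ι hF) (polyExt_mono ι h) hx

theorem barStar_smul {a : K} (ha : a ≠ 0) {E : Submodule R K} (hE : E ≠ ⊥) :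
    barStar star ι hι (a • E) = a • barStar star ι hι E := by
  have hιa : ι a ≠ 0 := (map_ne_zero ι).mpr ha
  ext x
  rw [mem_barStar, polyExt_smul, hstar.smul_eq _ hιa _ (polyExt_ne_bot ι hE),
    Submodule.mem_pointwise_smul_iff_inv_smul_mem₀ hιa,
    Submodule.mem_pointwise_smul_iff_inv_smul_mem₀ ha, mem_barStar, smul_eq_mul, smul_eq_mul,
    map_mul, map_inv₀]

theorem barStar_idem {E : Submodule R K} (hE : E ≠ ⊥) :
    barStar star ι hι (barStar star ι hι E) = barStar star ι hι E := by
  have hE' := polyExt_ne_bot ι hE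
  have hbarE' := polyExt_ne_bot ι (ne_bot_of_le_ne_bot hE (le_barStar hstar (hι := hι) hE))
  have key : star (polyExt ι (barStar star ι hι E)) = star (polyExt ι E) := by
    refine le_antisymm ?_ (hstar.mono _ _ hE' hbarE' (polyExt_mono ι (le_barStar hstar hE)))
    calc star (polyExt ι (barStar star ι hι E))
        ≤ star (star (polyExt ι E)) :=
          hstar.mono _ _ hbarE' (hstar.star_ne_bot hE') (polyExt_barStar_le E)
      _ = star (polyExt ι E) := hstar.idem _ hE'
  ext x
  rw [mem_barStar, mem_barStar, key]

theorem isSemistarOperation_barStar : IsSemistarOperation R K (barStar star ι hι) where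
  smul_eq _ ha _ hE := barStar_smul hstar ha hE
  le_star _ hE := le_barStar hstar hE
  mono _ _ hE hF h := barStar_mono hstar hE hF h
  idem _ hE := barStar_idem hstar hE

end BarStar

theorem barStar_one {star : Submodule R[X] L → Submodule R[X] L}
    (hone : star (1 : Submodule R[X] L) = 1) (ι : K →+* L)
    (hι : ∀ r : R, ι (algebraMap R K r) = algebraMap R[X] L (C r)) :
    barStar star ι hι (1 : Submodule R K) = 1 := by
  ext x
  rw [mem_barStar, polyExt_one ι hι, hone, apply_mem_one_iff ι hι]

/-- if `(R[X])^* = R[X]`, then `R^{\bar{*}} = R`; consequently the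
restriction of `\bar{*}` to the nonzero fractional ideals of `R` is a star operation on `R`
(it satisfies the semistar axioms and maps nonzero fractional ideals to nonzero
fractional ideals). -/
theorem barStar_one_eq_one
    (star : Submodule R[X] L → Submodule R[X] L)
    (hstar : IsSemistarOperation R[X] L star)
    (hone : star (1 : Submodule R[X] L) = 1)
    (ι : K →+* L)
    (hι : ∀ r : R, ι (algebraMap R K r) = algebraMap R[X] L (C r)) :
    barStar star ι hι (1 : Submodule R K) = 1 ∧
      IsSemistarOperation R K (barStar star ι hι) ∧
      ∀ I : Submodule R K, I ≠ ⊥ → IsFractional (nonZeroDivisors R) I →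
        IsFractional (nonZeroDivisors R) (barStar star ι hι I) :=
  ⟨barStar_one hone ι hι, isSemistarOperation_barStar hstar,
    fun _ hI => (isSemistarOperation_barStar hstar).isFractional (barStar_one hone ι hι) hI⟩
end

section
/- Let k be a field, R = k[Y], and X a further indeterminate, so R[X] = k[Y, X]. Let *_X denote the star operation of finite character on R[X] defined by I^{*_X} = ⋃{(IJ : J) : J a nonzero finitely generated fractional ideal of R[X]}, where (IJ : J) = {x ∈ k(Y, X) : xJ ⊆ IJ}. Then the ideal Q = (X, Y) of R[X] is a *_X-maximal ideal, Q ∩ R = YR ≠ (0), and (YR)[X] ⊊ Q; in particular, a *_X-maximal ideal of R[X] with nonzero contraction to R need not be extended from R. -/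
open Polynomial

/-- The set `I^{*} = ⋃ {(IJ : J) : J a nonzero finitely generated fractional ideal of S}`,
where `(IJ : J) = {x : xJ ⊆ IJ}`. -/
def bStarSet {S M : Type*} [CommRing S] [Field M] [Algebra S M] (E : Submodule S M) : Set M :=
  ⋃ J ∈ {J : Submodule S M | J ≠ ⊥ ∧ J.FG ∧ IsFractional (nonZeroDivisors S) J},
    (((E * J) / J : Submodule S M) : Set M)

/-- The image of an integral ideal of `S` in the quotient field `M`. -/
def idealToSub (S : Type*) {M : Type*} [CommRing S] [Field M] [Algebra S M]
    (Q : Ideal S) : Submodule S M :=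
  Submodule.map (Algebra.linearMap S M) Q

/-- `Q` is maximal among proper nonzero integral ideals closed under the operation
`I ↦ ⋃ {(IJ : J) : J nonzero f.g. fractional ideal}` (i.e. `Q` is `*`-maximal for this
star operation of finite character). -/
def IsBStarMaximal {S : Type*} (M : Type*) [CommRing S] [Field M] [Algebra S M]
    (Q : Ideal S) : Prop :=
  Q ≠ ⊥ ∧ Q ≠ ⊤ ∧
    bStarSet (idealToSub S Q : Submodule S M) = ((idealToSub S Q : Submodule S M) : Set M) ∧
    ∀ J : Ideal S, J ≠ ⊥ → J ≠ ⊤ →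
      bStarSet (idealToSub S J : Submodule S M) = ((idealToSub S J : Submodule S M) : Set M) →
      Q ≤ J → Q = J

lemma mem_spanXY_iff {k : Type*} [Field k] (p : Polynomial (Polynomial k)) :
    p ∈ Ideal.span {(X : Polynomial (Polynomial k)), C (X : Polynomial k)} ↔
      (p.coeff 0).coeff 0 = 0 := by
  constructor
  · intro hp
    rw [Ideal.mem_span_pair] at hp
    obtain ⟨a, b, rfl⟩ := hp
    simp [mul_coeff_zero, coeff_X_zero, coeff_C_zero]
  · intro hp
    have h1 : (X : Polynomial (Polynomial k)) ∣ (p - C (p.coeff 0)) := by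
      rw [X_dvd_iff]
      simp
    have h2 : (X : Polynomial k) ∣ p.coeff 0 := X_dvd_iff.2 hp
    obtain ⟨a, ha⟩ := h1
    obtain ⟨b, hb⟩ := h2
    rw [Ideal.mem_span_pair]
    refine ⟨a, C b, ?_⟩
    have : p = X * a + C (p.coeff 0) := by linear_combination ha
    rw [this, hb]
    ring_nf
    rw [← C_mul]
    ring_nf
  
lemma spanXY_isMaximal {k : Type*} [Field k] :
    (Ideal.span {(X : Polynomial (Polynomial k)), C (X : Polynomial k)}).IsMaximal := by
  have hker : Ideal.span {(X : Polynomial (Polynomial k)), C (X : Polynomial k)} =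
      RingHom.ker ((evalRingHom (0 : k)).comp (evalRingHom (0 : Polynomial k))) := by
    ext p
    rw [mem_spanXY_iff, RingHom.mem_ker]
    simp [coeff_zero_eq_eval_zero]
  rw [hker]
  apply RingHom.ker_isMaximal_of_surjective
  intro c
  exact ⟨C (C c), by simp⟩

lemma idealToSub_mul_eq_smul {S M : Type*} [CommRing S] [Field M] [Algebra S M]
    (Q : Ideal S) (J : Submodule S M) : (idealToSub S Q) * J = Q • J := by
  apply le_antisymm
  · refine Submodule.mul_le.2 ?_
    rintro e ⟨q, hq, rfl⟩ j hj
    have : q • j ∈ Q • J := Submodule.smul_mem_smul hq hj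
    simpa [Algebra.smul_def] using this
  · refine Submodule.smul_le.2 fun q hq j hj => ?_
    have : Algebra.linearMap S M q * j ∈ idealToSub S Q * J :=
      Submodule.mul_mem_mul ⟨q, hq, rfl⟩ hj
    simpa [Algebra.smul_def] using this

lemma bStar_eq_of_prime {S M : Type*} [CommRing S] [IsDomain S] [IsIntegrallyClosed S]
    [Field M] [Algebra S M] [IsFractionRing S M] (Q : Ideal S) (hQ : Q.IsPrime) :
    bStarSet (idealToSub S Q : Submodule S M) = ((idealToSub S Q : Submodule S M) : Set M) := by
  ext x
  simp only [bStarSet, Set.mem_iUnion, Set.mem_setOf_eq, SetLike.mem_coe, exists_prop]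
  constructor
  · rintro ⟨J, ⟨hJbot, hJfg, -⟩, hx⟩
    rw [Submodule.mem_div_iff_forall_mul_mem] at hx
    have hxJQ : ∀ j ∈ J, x * j ∈ Q • J := fun j hj =>
      (idealToSub_mul_eq_smul Q J) ▸ hx j hj
    have hQJle : Q • J ≤ J := Submodule.smul_le.2 fun q _ j hj => J.smul_mem q hj
    have hxJ : ∀ j ∈ J, (LinearMap.mulLeft S x) j ∈ J := fun j hj => hQJle (hxJQ j hj)
    let f : J →ₗ[S] J := (LinearMap.mulLeft S x).restrict hxJ
    haveI : Module.Finite S J := Module.Finite.iff_fg.mpr hJfg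
    have hrange : LinearMap.range f ≤ Q • (⊤ : Submodule S J) := by
      rintro _ ⟨j, rfl⟩
      rw [Submodule.mem_smul_top_iff]
      have : ((f j : J) : M) = x * (j : M) := rfl
      rw [this]
      exact hxJQ j j.2
    obtain ⟨p, hmonic, -, hcoeff, heval⟩ :=
      LinearMap.exists_monic_and_coeff_mem_pow_and_aeval_eq_zero_of_range_le_smul S f Q hrange
    have hfpow : ∀ (m : ℕ) (j : J), (((f ^ m) j : J) : M) = x ^ m * (j : M) := by
      intro m
      induction m with
      | zero => intro j; simp
      | succ m ih =>
        intro j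
        rw [pow_succ, Module.End.mul_apply, ih (f j)]
        have : ((f j : J) : M) = x * (j : M) := rfl
        rw [this, pow_succ]
        ring
    have key : ∀ (q : S[X]) (j : J),
        (((Polynomial.aeval f q) j : J) : M) = Polynomial.aeval x q * (j : M) := by
      intro q
      induction q using Polynomial.induction_on' with
      | add a b ha hb =>
        intro j
        simp only [map_add, LinearMap.add_apply, Submodule.coe_add, ha j, hb j, add_mul]
      | monomial n a =>
        intro j
        rw [Polynomial.aeval_monomial, Polynomial.aeval_monomial]
        rw [Module.End.mul_apply, Module.algebraMap_end_apply]
        push_cast [SetLike.val_smul]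
        rw [hfpow n j, Algebra.smul_def]
        ring
    obtain ⟨j0, hj0J, hj0⟩ := Submodule.ne_bot_iff J |>.1 hJbot
    have hpx : Polynomial.aeval x p = 0 := by
      have h0 : (((Polynomial.aeval f p) ⟨j0, hj0J⟩ : J) : M) = 0 := by
        rw [heval]; rfl
      rw [key p ⟨j0, hj0J⟩] at h0
      exact (mul_eq_zero.1 h0).resolve_right hj0
    have hint : IsIntegral S x := ⟨p, hmonic, by rwa [← Polynomial.aeval_def]⟩
    obtain ⟨s, rfl⟩ := IsIntegrallyClosed.isIntegral_iff.mp hint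
    have hev : p.eval s = 0 := by
      apply IsFractionRing.injective S M
      rw [← Polynomial.aeval_algebraMap_apply_eq_algebraMap_eval, hpx, map_zero]
    have hsn : s ^ p.natDegree ∈ Q := by
      have hsum := Polynomial.eval_eq_sum_range (p := p) s
      rw [Finset.sum_range_succ, hmonic.coeff_natDegree, one_mul, hev] at hsum
      have hrw : s ^ p.natDegree =
          -∑ i ∈ Finset.range p.natDegree, p.coeff i * s ^ i := by
        linear_combination -hsum
      rw [hrw]
      refine Q.neg_mem (Ideal.sum_mem _ fun i hi => Q.mul_mem_right _ ?_)
      exact Ideal.pow_le_self (Nat.sub_ne_zero_of_lt (Finset.mem_range.1 hi)) (hcoeff i)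
    have hsQ : s ∈ Q := hQ.mem_of_pow_mem _ hsn
    exact ⟨s, hsQ, rfl⟩
  · intro hx
    refine ⟨1, ⟨?_, ?_, ?_⟩, ?_⟩
    · simp [Submodule.one_eq_span, Submodule.span_singleton_eq_bot]
    · exact Submodule.one_eq_span (R := S) (A := M) ▸ Submodule.fg_span_singleton 1
    · refine ⟨1, Submonoid.one_mem _, fun b hb => ?_⟩
      obtain ⟨y, hy⟩ := Submodule.mem_one.1 hb
      exact ⟨y, by simpa using hy⟩
    · rw [Submodule.mul_one, Submodule.mem_div_iff_forall_mul_mem]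
      intro y hy
      obtain ⟨z, rfl⟩ := Submodule.mem_one.1 hy
      rw [mul_comm, ← Algebra.smul_def]
      exact Submodule.smul_mem _ _ hx

/-- for `R = k[Y]` and `R[X] = k[Y,X]`, the ideal `Q = (X, Y)` of `R[X]`
is `*_X`-maximal, `Q ∩ R = YR ≠ (0)`, and `(Q ∩ R)[X] ⊊ Q`: a `*_X`-maximal ideal with
nonzero contraction to `R` need not be extended from `R`. -/
theorem statement13 {k L : Type*} [Field k] [Field L]
    [Algebra (Polynomial (Polynomial k)) L] [IsFractionRing (Polynomial (Polynomial k)) L] :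
    letI R := Polynomial k
    ∀ Q : Ideal (Polynomial R), Q = Ideal.span {(X : Polynomial R), C (X : R)} →
      IsBStarMaximal L Q ∧
        Q.comap (C : R →+* Polynomial R) = Ideal.span {(X : R)} ∧
        Q.comap (C : R →+* Polynomial R) ≠ ⊥ ∧
        (Q.comap (C : R →+* Polynomial R)).map (C : R →+* Polynomial R) < Q := by
  intro Q hQ
  subst hQ
  have hmax : (Ideal.span {(X : Polynomial (Polynomial k)), C (X : Polynomial k)}).IsMaximal :=
    spanXY_isMaximal
  have hXmem : (X : Polynomial (Polynomial k)) ∈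
      Ideal.span {(X : Polynomial (Polynomial k)), C (X : Polynomial k)} :=
    Ideal.subset_span (by simp)
  have hcomap : (Ideal.span {(X : Polynomial (Polynomial k)), C (X : Polynomial k)}).comap
      (C : Polynomial k →+* Polynomial (Polynomial k)) = Ideal.span {(X : Polynomial k)} := by
    ext r
    rw [Ideal.mem_comap, mem_spanXY_iff, coeff_C_zero, Ideal.mem_span_singleton, ← X_dvd_iff]
  refine ⟨⟨?_, hmax.ne_top, ?_, ?_⟩, hcomap, ?_, ?_⟩
  · intro h
    rw [h] at hXmem
    exact X_ne_zero (Ideal.mem_bot.1 hXmem)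
  · exact bStar_eq_of_prime _ hmax.isPrime
  · intro J _ hJtop _ hQJ
    exact hmax.eq_of_le hJtop hQJ
  · rw [hcomap]
    intro h
    have : (X : Polynomial k) ∈ Ideal.span {(X : Polynomial k)} :=
      Ideal.subset_span rfl
    rw [h] at this
    exact X_ne_zero (Ideal.mem_bot.1 this)
  · refine lt_of_le_of_ne Ideal.map_comap_le fun h => ?_
    rw [← h, hcomap, Ideal.map_span, Set.image_singleton] at hXmem
    obtain ⟨q, hq⟩ := Ideal.mem_span_singleton.1 hXmem
    have h1 := congrArg (fun p => Polynomial.coeff p 1) hq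
    simp only [coeff_X_one, coeff_C_mul] at h1
    exact Polynomial.not_isUnit_X (R := k) (IsUnit.of_mul_eq_one _ h1.symm)
end

section
/- Let k be a field, R = k[Y], and X a further indeterminate, so R[X] = k[Y, X]. Let *_X denote the star operation of finite character on R[X] defined by I^{*_X} = ⋃{(IJ : J) : J a nonzero finitely generated fractional ideal of R[X]}, where (IJ : J) = {x ∈ k(Y, X) : xJ ⊆ IJ}. Then every upper to zero Q in R[X] is a principal ideal of R[X] (and hence *_X-invertible, i.e. (Q·(R[X] : Q))^{*_X} = R[X]), but Q is not a *_X-maximal ideal of R[X]. -/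
open Polynomial

/-- An *upper to zero* in `R[X]`: a nonzero prime ideal `Q` with `Q ∩ R = (0)`. -/
def IsUpperToZero {R : Type*} [CommRing R] [IsDomain R] (Q : Ideal R[X]) : Prop :=
  Q.IsPrime ∧ Q ≠ ⊥ ∧ Q.comap (C : R →+* R[X]) = ⊥

section Aux

variable {S L : Type*} [CommRing S] [IsDomain S] [Field L] [Algebra S L] [IsFractionRing S L]

lemma aux_mem_one [IsIntegrallyClosed S] (J : Submodule S L) (hJ : J ≠ ⊥) (hfg : J.FG)
    (x : L) (hx : ∀ n ∈ J, x * n ∈ J) : x ∈ (1 : Submodule S L) := by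
  have hint : IsIntegral S x :=
    isIntegral_of_smul_mem_submodule J hJ hfg x (by simpa [smul_eq_mul] using hx)
  obtain ⟨y, hy⟩ := IsIntegrallyClosed.isIntegral_iff.mp hint
  exact Submodule.mem_one.mpr ⟨y, hy⟩

lemma aux_subset_bStar (E : Submodule S L) : (E : Set L) ⊆ bStarSet E := by
  intro x hx
  refine Set.mem_iUnion₂.mpr ⟨1, ⟨?_, ?_, ?_⟩, ?_⟩
  · intro h
    have h1 : (1 : L) ∈ (1 : Submodule S L) := Submodule.one_le.mp le_rfl
    rw [h, Submodule.mem_bot] at h1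
    exact one_ne_zero h1
  · rw [Submodule.one_eq_span]
    exact Submodule.fg_span_singleton _
  · refine ⟨1, Submonoid.one_mem _, fun b hb => ?_⟩
    obtain ⟨y, hy⟩ := Submodule.mem_one.mp hb
    exact ⟨y, by simpa using hy⟩
  · exact Submodule.mem_div_iff_forall_mul_mem.mpr fun y hy => Submodule.mul_mem_mul hx hy

lemma aux_bStar_one [IsIntegrallyClosed S] :
    bStarSet (1 : Submodule S L) = ((1 : Submodule S L) : Set L) := by
  refine subset_antisymm ?_ (aux_subset_bStar _)
  intro x hx
  obtain ⟨J, hJ, hxJ⟩ := Set.mem_iUnion₂.mp hx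
  obtain ⟨hJbot, hfg, -⟩ := hJ
  rw [SetLike.mem_coe, one_mul] at hxJ
  exact aux_mem_one J hJbot hfg x fun n hn => Submodule.mem_div_iff_forall_mul_mem.mp hxJ n hn

lemma aux_bStar_maximal [IsIntegrallyClosed S] (m : Ideal S) (hm : m.IsMaximal) :
    bStarSet (idealToSub S m : Submodule S L) = ((idealToSub S m : Submodule S L) : Set L) := by
  refine subset_antisymm ?_ (aux_subset_bStar _)
  intro x hx
  obtain ⟨J, hJ, hxJ⟩ := Set.mem_iUnion₂.mp hx
  obtain ⟨hJbot, hfg, -⟩ := hJ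
  rw [SetLike.mem_coe] at hxJ
  set I : Submodule S L := idealToSub S m with hI
  have hmul : ∀ n ∈ J, x * n ∈ I * J := fun n hn =>
    Submodule.mem_div_iff_forall_mul_mem.mp hxJ n hn
  have hIJ : I * J ≤ m • J := by
    refine Submodule.mul_le.mpr fun i hi n hn => ?_
    obtain ⟨r, hrm, rfl⟩ := hi
    have : (Algebra.linearMap S L) r * n = r • n := by
      simp [Algebra.smul_def]
    rw [this]
    exact Submodule.smul_mem_smul hrm hn
  have hJJ : I * J ≤ J := le_trans hIJ (Submodule.smul_le.mpr fun r _ n hn => J.smul_mem r hn)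
  have hx1 : x ∈ (1 : Submodule S L) :=
    aux_mem_one J hJbot hfg x fun n hn => hJJ (hmul n hn)
  obtain ⟨y, rfl⟩ := Submodule.mem_one.mp hx1
  by_cases hy : y ∈ m
  · exact ⟨y, hy, rfl⟩
  · exfalso
    obtain ⟨z, a, ham, hza⟩ := hm.exists_inv hy
    have hJle : J ≤ m • J := by
      intro j hj
      have h3 : (z * y) • j ∈ m • J := by
        have : (z * y) • j = z • (algebraMap S L y * j) := by
          rw [Algebra.smul_def, Algebra.smul_def, map_mul, mul_assoc]
        rw [this]
        exact Submodule.smul_mem _ z (hIJ (hmul j hj))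
      have h4 : a • j ∈ m • J := Submodule.smul_mem_smul ham hj
      have : j = (z * y) • j + a • j := by
        rw [← add_smul, hza, one_smul]
      rw [this]
      exact Submodule.add_mem _ h3 h4
    obtain ⟨r, hr1, hr0⟩ :=
      Submodule.exists_sub_one_mem_and_smul_eq_zero_of_fg_of_le_smul m J hfg hJle
    obtain ⟨n, hnJ, hn0⟩ := Submodule.exists_mem_ne_zero_of_ne_bot hJbot
    have h0 : r • n = 0 := hr0 n hnJ
    rw [Algebra.smul_def, mul_eq_zero] at h0
    rcases h0 with h0 | h0
    · have hr : r = 0 :=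
        (injective_iff_map_eq_zero (algebraMap S L)).mp (IsFractionRing.injective S L) r h0
      rw [hr, zero_sub] at hr1
      have : (1 : S) ∈ m := by simpa using m.neg_mem hr1
      exact hm.ne_top (Ideal.eq_top_iff_one m |>.mpr this)
    · exact hn0 h0

end Aux

/-- Every upper to zero in `k[Y][X]` is generated by a prime element. -/
lemma upperToZero_eq_span {k : Type*} [Field k]
    (Q : Ideal (Polynomial (Polynomial k))) (hQ : IsUpperToZero Q) :
    ∃ p : Polynomial (Polynomial k), Prime p ∧ Q = Ideal.span {p} := by
  classical
  obtain ⟨hQprime, hQbot, hQcomap⟩ := hQ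
  set R := Polynomial k
  letI : NormalizedGCDMonoid k := inferInstance
  let K := FractionRing R
  obtain ⟨p, hpQ, hp⟩ := hQprime.exists_mem_prime_of_ne_bot hQbot
  have hpnotC : ∀ a : R, p ≠ C a := by
    intro a h
    have : a ∈ Q.comap (C : R →+* R[X]) := by
      rw [Ideal.mem_comap, ← h]; exact hpQ
    rw [hQcomap, Ideal.mem_bot] at this
    exact hp.ne_zero (by rw [h, this, map_zero])
  have hprim : p.IsPrimitive := by
    intro r hr
    obtain ⟨g, hg⟩ := hr
    rcases hp.irreducible.isUnit_or_isUnit hg with h | h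
    · exact Polynomial.isUnit_C.mp h
    · obtain ⟨u, hu, hug⟩ := Polynomial.isUnit_iff.mp h
      exfalso
      exact hpnotC (r * u) (by rw [hg, ← hug, ← C_mul])
  have hinj : Function.Injective (algebraMap R K) := IsFractionRing.injective R K
  have hmapinj : Function.Injective (Polynomial.map (algebraMap R K)) :=
    Polynomial.map_injective _ hinj
  have hpK_irr : Irreducible (p.map (algebraMap R K)) :=
    hprim.irreducible_iff_irreducible_map_fraction_map.mp hp.irreducible
  have key : ∀ q ∈ Q, p ∣ q := by
    intro q hq
    by_cases hq0 : q = 0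
    · rw [hq0]; exact dvd_zero p
    have hdvdK : p.map (algebraMap R K) ∣ q.map (algebraMap R K) := by
      by_contra hnd
      have hco := hpK_irr.coprime_iff_not_dvd.mpr hnd
      obtain ⟨a, b, hab⟩ := hco
      obtain ⟨c, hc⟩ := IsLocalization.integerNormalization_map_to_map (nonZeroDivisors R) a
      obtain ⟨d, hd⟩ := IsLocalization.integerNormalization_map_to_map (nonZeroDivisors R) b
      set a' := IsLocalization.integerNormalization (nonZeroDivisors R) a
      set b' := IsLocalization.integerNormalization (nonZeroDivisors R) b
      have heq : (C (d : R) * a') * p + (C (c : R) * b') * q = C ((c : R) * (d : R)) := by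
        apply hmapinj
        have hsm : ∀ (e : R) (f : K[X]), (e : R) • f = C (algebraMap R K e) * f := by
          intro e f
          rw [← algebraMap_smul K e f, Polynomial.smul_eq_C_mul]
        rw [Polynomial.map_add, Polynomial.map_mul, Polynomial.map_mul, Polynomial.map_mul,
          Polynomial.map_mul, Polynomial.map_C, Polynomial.map_C, hc, hd, hsm _ a, hsm _ b,
          Polynomial.map_C, map_mul, C_mul]
        linear_combination (C (algebraMap R K (c : R)) * C (algebraMap R K (d : R))) * hab
      have hCQ : C ((c : R) * (d : R)) ∈ Q := by
        rw [← heq]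
        exact Ideal.add_mem Q (Ideal.mul_mem_left Q _ hpQ) (Ideal.mul_mem_left Q _ hq)
      have : (c : R) * (d : R) ∈ Q.comap (C : R →+* R[X]) := hCQ
      rw [hQcomap, Ideal.mem_bot] at this
      rcases mul_eq_zero.mp this with h | h
      · exact nonZeroDivisors.coe_ne_zero c h
      · exact nonZeroDivisors.coe_ne_zero d h
    -- transfer divisibility back
    have hcontent : q.content ≠ 0 := fun h => hq0 (Polynomial.content_eq_zero_iff.mp h)
    have hpK_prime : Prime (p.map (algebraMap R K)) :=
      UniqueFactorizationMonoid.irreducible_iff_prime.mp hpK_irr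
    have hsplit : q.map (algebraMap R K) =
        C (algebraMap R K q.content) * q.primPart.map (algebraMap R K) := by
      conv_lhs => rw [q.eq_C_content_mul_primPart]
      rw [Polynomial.map_mul, Polynomial.map_C]
    have hdvdpp : p.map (algebraMap R K) ∣ q.primPart.map (algebraMap R K) := by
      rw [hsplit] at hdvdK
      rcases hpK_prime.2.2 _ _ hdvdK with h | h
      · exfalso
        have hunit : IsUnit (C (algebraMap R K q.content)) :=
          Polynomial.isUnit_C.mpr (isUnit_iff_ne_zero.mpr fun h0 =>
            hcontent ((injective_iff_map_eq_zero _).mp hinj _ h0))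
        exact hpK_prime.not_isUnit (isUnit_of_dvd_unit h hunit)
      · exact h
    have : p ∣ q.primPart :=
      hprim.dvd_of_fraction_map_dvd_fraction_map hdvdpp
    exact this.trans q.primPart_dvd
  refine ⟨p, hp, le_antisymm ?_ ?_⟩
  · intro q hq
    exact Ideal.mem_span_singleton.mpr (key q hq)
  · rw [Ideal.span_le, Set.singleton_subset_iff]
    exact hpQ

/-- for `R = k[Y]` and `R[X] = k[Y,X]`, every upper to zero `Q` in `R[X]` is
principal (hence `*_X`-invertible: `(Q·(R[X] : Q))^{*_X} = R[X]`), but `Q` is not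
`*_X`-maximal. -/
theorem statement14 {k L : Type*} [Field k] [Field L]
    [Algebra (Polynomial (Polynomial k)) L] [IsFractionRing (Polynomial (Polynomial k)) L] :
    letI R := Polynomial k
    ∀ Q : Ideal (Polynomial R), IsUpperToZero Q →
      (∃ f : Polynomial R, Q = Ideal.span {f}) ∧
        bStarSet ((idealToSub (Polynomial R) Q : Submodule (Polynomial R) L) *
            ((1 : Submodule (Polynomial R) L) / idealToSub (Polynomial R) Q)) =
          ((1 : Submodule (Polynomial R) L) : Set L) ∧
        ¬ IsBStarMaximal L Q := by
  intro Q hQ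
  obtain ⟨f, hf, hQf⟩ := upperToZero_eq_span Q hQ
  obtain ⟨hQprime, hQbot, hQcomap⟩ := hQ
  have hf0 : f ≠ 0 := hf.ne_zero
  constructor
  · exact ⟨f, hQf⟩
  constructor
  · -- Q is b-star invertible
    set u : L := algebraMap (Polynomial (Polynomial k)) L f with hu
    have hu0 : u ≠ 0 := fun h =>
      hf0 ((injective_iff_map_eq_zero _).mp (IsFractionRing.injective (Polynomial (Polynomial k)) L) f h)
    have hP : (idealToSub (Polynomial (Polynomial k)) Q : Submodule (Polynomial (Polynomial k)) L) = Submodule.span (Polynomial (Polynomial k)) {u} := by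
      rw [hQf, idealToSub, Ideal.span, Submodule.map_span, Set.image_singleton]
      rfl
    have hPinv : (idealToSub (Polynomial (Polynomial k)) Q : Submodule (Polynomial (Polynomial k)) L) *
        ((1 : Submodule (Polynomial (Polynomial k)) L) / idealToSub (Polynomial (Polynomial k)) Q) = 1 := by
      apply le_antisymm
      · exact Submodule.mul_one_div_le_one
      · rw [Submodule.one_le]
        have humem : u ∈ idealToSub ((Polynomial (Polynomial k))) Q := by
          rw [hP]; exact Submodule.subset_span rfl
        have huinv : u⁻¹ ∈ (1 : Submodule (Polynomial (Polynomial k)) L) / idealToSub (Polynomial (Polynomial k)) Q := by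
          rw [Submodule.mem_div_iff_forall_mul_mem]
          intro y hy
          rw [hP, Submodule.mem_span_singleton] at hy
          obtain ⟨c, rfl⟩ := hy
          have : u⁻¹ * (c • u) = algebraMap (Polynomial (Polynomial k)) L c := by
            rw [Algebra.smul_def, ← mul_assoc, mul_comm u⁻¹, mul_assoc,
              inv_mul_cancel₀ hu0, mul_one]
          rw [this]
          exact Submodule.mem_one.mpr ⟨c, rfl⟩
        have := Submodule.mul_mem_mul humem huinv
        rwa [mul_inv_cancel₀ hu0] at this
    rw [hPinv]
    exact aux_bStar_one
  · -- Q is not b-star maximal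
    rintro ⟨-, hQtop, -, hmax⟩
    obtain ⟨m, hmmax, hQm⟩ := Ideal.exists_le_maximal Q hQtop
    have hmbot : m ≠ ⊥ := fun h => hQbot (le_bot_iff.mp (h ▸ hQm))
    have heq : Q = m := hmax m hmbot hmmax.ne_top (aux_bStar_maximal m hmmax) hQm
    haveI : m.IsMaximal := hmmax
    have hcm : (m.comap (C : Polynomial k →+* Polynomial (Polynomial k))).IsMaximal :=
      Polynomial.isMaximal_comap_C_of_isJacobsonRing m
    have hne : m.comap (C : Polynomial k →+* Polynomial (Polynomial k)) ≠ ⊥ :=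
      Ring.ne_bot_of_isMaximal_of_not_isField hcm (Polynomial.not_isField k)
    rw [← heq, hQcomap] at hne
    exact hne rfl
end
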